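/- There are no rationals M, M₁, t with M = tan α, M₁ = tan α₁ where α, α₁ are Heron angles (sine and cosine rational) in (0, π/2), t = tan ψ with ψ a Heron angle, t ≠ 0, satisfying both M₁ M = 1 and M₁² - M² = t². Equivalently, the system tan α · tan α₁ = 1 and tan²α₁ - tan²α = tan²ψ has no solution with α, α₁, ψ all Heron angles and ψ nontrivial. -/

import Mathlib

/-!
With `M = tan α` and `t = tan ψ`, both rational, `tan α₁ = 1 / M` turns the second equation into
`1 - M⁴ = (M t)²`, a rational point on `X⁴ - Y⁴ = Z²` with `Y Z ≠ 0`. Fermat's descent excludes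
these. In a primitive integer solution of `x⁴ - y⁴ = z²` one of `y²`, `z` is odd. If `y²` is odd,
the Pythagorean triple `(y², z, x²)` gives `x² = m² + n²`, `y² = m² - n²`, hence
`m⁴ - n⁴ = (x y)²` with `|m| < |x|`. If `z` is odd, the triple `(z, y², x²)` leads to
`x² = u⁴ + 4 v⁴`, and the triple `(u², 2 v², x)` to `u² = e⁴ - f⁴` with `e⁴ < x`.
-/

theorem Int.sq_of_isCoprime_of_nonneg {a b c : ℤ} (hab : IsCoprime a b) (heq : a * b = c ^ 2)
    (ha : 0 ≤ a) : ∃ s, a = s ^ 2 := by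
  obtain ⟨s, hs | hs⟩ := Int.sq_of_isCoprime hab heq
  · exact ⟨s, hs⟩
  · exact ⟨s, by nlinarith [sq_nonneg s]⟩

theorem Rat.den_eq_one_of_sq_eq_intCast {w : ℚ} {c : ℤ} (h : w ^ 2 = c) : w.den = 1 := by
  have hden := congrArg Rat.den h
  rw [Rat.den_pow, Rat.den_intCast, Nat.pow_eq_one] at hden
  omega

def Fermat42Sub (x y z : ℤ) : Prop :=
  y ≠ 0 ∧ z ≠ 0 ∧ x ^ 4 - y ^ 4 = z ^ 2

namespace Fermat42Sub

variable {x y z : ℤ}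

theorem ne_zero (h : Fermat42Sub x y z) : x ≠ 0 := by
  obtain ⟨hy, -, heq⟩ := h
  rintro rfl
  have : 0 < y ^ 4 := by positivity
  nlinarith [sq_nonneg z]

theorem exists_smaller_of_gcd_ne_one (h : Fermat42Sub x y z) (hxy : Int.gcd x y ≠ 1) :
    ∃ x' y' z', Fermat42Sub x' y' z' ∧ x'.natAbs < x.natAbs := by
  have hx := h.ne_zero
  obtain ⟨hy, hz, heq⟩ := h
  obtain ⟨g, x', y', hg, hco, rfl, rfl⟩ := Int.exists_gcd_one' (Int.gcd_pos_of_ne_zero_right x hy)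
  have hg1 : 1 < g := by
    rw [Int.gcd_mul_right, hco, Int.natAbs_natCast] at hxy
    omega
  obtain ⟨z', rfl⟩ : (g : ℤ) ^ 2 ∣ z :=
    (Int.pow_dvd_pow_iff two_ne_zero).mp ⟨x' ^ 4 - y' ^ 4, by rw [← heq]; ring⟩
  refine ⟨x', y', z', ⟨left_ne_zero_of_mul hy, right_ne_zero_of_mul hz, ?_⟩, ?_⟩
  · have hg0 : (g : ℤ) ^ 4 ≠ 0 := by positivity
    exact mul_left_cancel₀ hg0 (by linear_combination heq)
  · rw [Int.natAbs_mul, Int.natAbs_natCast]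
    have := Int.natAbs_pos.mpr (left_ne_zero_of_mul hx)
    nlinarith

theorem exists_smaller_of_sq_eq_pow_four_add_four_mul_pow_four {X u v : ℤ} (hX : 0 < X) (hv : v ≠ 0)
    (hu : u ^ 2 % 2 = 1) (hco : Int.gcd (u ^ 2) (2 * v ^ 2) = 1)
    (h : X ^ 2 = u ^ 4 + 4 * v ^ 4) :
    ∃ x' y' z', Fermat42Sub x' y' z' ∧ x'.natAbs < X.natAbs := by
  have htriple : PythagoreanTriple (u ^ 2) (2 * v ^ 2) X := by
    unfold PythagoreanTriple
    linear_combination -h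
  obtain ⟨p, q, hu2, hv2, hX2, hpq, -, hp⟩ := htriple.coprime_classification' hco hu hX
  have hpqv : p * q = v ^ 2 := by linarith
  have hq : 0 < q := pos_of_mul_pos_right (hpqv ▸ by positivity) hp
  have hpq' := Int.isCoprime_iff_gcd_eq_one.mpr hpq
  obtain ⟨e, rfl⟩ := Int.sq_of_isCoprime_of_nonneg hpq' hpqv hp
  obtain ⟨f, rfl⟩ :=
    Int.sq_of_isCoprime_of_nonneg hpq'.symm (c := v) (by linear_combination hpqv) hq.le
  refine ⟨e, f, u, ⟨?_, ?_, ?_⟩, ?_⟩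
  · rintro rfl
    simp at hq
  · rintro rfl
    norm_num at hu
  · linear_combination -hu2
  · have hf : 0 < f ^ 2 := by positivity
    have : (e.natAbs : ℤ) < X := calc
      (e.natAbs : ℤ) ≤ e ^ 2 := Int.natAbs_le_self_sq e
      _ ≤ (e ^ 2) ^ 2 := Int.le_self_sq _
      _ < X := by nlinarith
    omega

theorem exists_smaller_of_sq_eq_two_mul {x y a b : ℤ} (hx : 0 < x) (hy : y ≠ 0) (ha : 0 ≤ a)
    (hb : 0 ≤ b) (hab : Int.gcd a b = 1) (ha2 : a % 2 = 0) (hb2 : b % 2 = 1)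
    (hsum : x ^ 2 = a ^ 2 + b ^ 2) (hprod : y ^ 2 = 2 * a * b) :
    ∃ x' y' z', Fermat42Sub x' y' z' ∧ x'.natAbs < x.natAbs := by
  obtain ⟨c, rfl⟩ : ∃ c, a = 2 * c := ⟨a / 2, by omega⟩
  obtain ⟨w, rfl⟩ : Even y := (Int.even_pow' two_ne_zero).mp ⟨2 * c * b, by rw [hprod]; ring⟩
  have hcb : c * b = w ^ 2 := by linarith
  have hcop : IsCoprime c b := (Int.isCoprime_iff_gcd_eq_one.mpr hab).of_mul_left_right
  obtain ⟨s, rfl⟩ := Int.sq_of_isCoprime_of_nonneg hcop hcb (by omega)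
  obtain ⟨t, rfl⟩ := Int.sq_of_isCoprime_of_nonneg hcop.symm (c := w) (by linarith) hb
  have hs : s ≠ 0 := by
    rintro rfl
    apply hy
    simp_all
  exact exists_smaller_of_sq_eq_pow_four_add_four_mul_pow_four hx hs hb2 (by rwa [Int.gcd_comm])
    (by linear_combination hsum)

theorem exists_smaller_of_odd_left (h : x ^ 4 - y ^ 4 = z ^ 2) (hx : 0 < x) (hz : z ≠ 0)
    (hco : Int.gcd (y ^ 2) z = 1) (hy : y ^ 2 % 2 = 1) :
    ∃ x' y' z', Fermat42Sub x' y' z' ∧ x'.natAbs < x.natAbs := by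
  have htriple : PythagoreanTriple (y ^ 2) z (x ^ 2) := by
    unfold PythagoreanTriple
    linear_combination -h
  obtain ⟨m, n, hy2, hz2, hx2, -⟩ := htriple.coprime_classification' hco hy (by positivity)
  have hn : n ≠ 0 := by
    rintro rfl
    simp_all
  refine ⟨m, n, x * y, ⟨hn, mul_ne_zero hx.ne' ?_, ?_⟩, ?_⟩
  · rintro rfl
    norm_num at hy
  · linear_combination (-(m ^ 2 + n ^ 2)) * hy2 - y ^ 2 * hx2
  · have : 0 < n ^ 2 := by positivity
    exact Int.natAbs_lt_iff_sq_lt.mpr (by linarith)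

theorem exists_smaller_of_odd_right (h : x ^ 4 - y ^ 4 = z ^ 2) (hx : 0 < x) (hy : y ≠ 0)
    (hco : Int.gcd z (y ^ 2) = 1) (hz : z % 2 = 1) :
    ∃ x' y' z', Fermat42Sub x' y' z' ∧ x'.natAbs < x.natAbs := by
  have htriple : PythagoreanTriple z (y ^ 2) (x ^ 2) := by
    unfold PythagoreanTriple
    linear_combination -h
  obtain ⟨m, n, -, hy2, hx2, hmn, hpar, hm⟩ :=
    htriple.coprime_classification' hco hz (by positivity)
  have hn : 0 ≤ n := by
    have : 0 < y ^ 2 := by positivity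
    have : 0 < m * n := by linarith
    exact (pos_of_mul_pos_right this hm).le
  rcases hpar with ⟨hm2, hn2⟩ | ⟨hm2, hn2⟩
  · exact exists_smaller_of_sq_eq_two_mul hx hy hm hn hmn hm2 hn2 hx2 hy2
  · exact exists_smaller_of_sq_eq_two_mul hx hy hn hm (by rwa [Int.gcd_comm]) hn2 hm2
      (by linarith) (by linarith)

theorem isCoprime_sq_of_isCoprime (h : x ^ 4 - y ^ 4 = z ^ 2) (hxy : IsCoprime x y) :
    IsCoprime (y ^ 2) z := by
  have h4 : IsCoprime (y ^ 4) (x ^ 4 + y ^ 4 * -1) := hxy.symm.pow.add_mul_left_right (-1)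
  rw [show x ^ 4 + y ^ 4 * -1 = z ^ 2 by linear_combination h, show y ^ 4 = (y ^ 2) ^ 2 by ring,
    IsCoprime.pow_iff two_pos two_pos] at h4
  exact h4

theorem exists_smaller (h : Fermat42Sub x y z) :
    ∃ x' y' z', Fermat42Sub x' y' z' ∧ x'.natAbs < x.natAbs := by
  wlog hx : 0 < x generalizing x
  · have hx' : Fermat42Sub (-x) y z := ⟨h.1, h.2.1, by rw [Even.neg_pow (by decide)]; exact h.2.2⟩
    simpa using this hx' (by have := h.ne_zero; omega)
  obtain ⟨hy, hz, heq⟩ := h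
  by_cases hxy : Int.gcd x y = 1
  · have hco := isCoprime_sq_of_isCoprime heq (Int.isCoprime_iff_gcd_eq_one.mpr hxy)
    rcases Int.emod_two_eq (y ^ 2) with hy2 | hy2
    · have hz2 : z % 2 = 1 := by
        refine (Int.emod_two_eq z).resolve_left fun hz2 => ?_
        have := hco.isUnit_of_dvd' (Int.dvd_of_emod_eq_zero hy2) (Int.dvd_of_emod_eq_zero hz2)
        norm_num [Int.isUnit_iff] at this
      exact exists_smaller_of_odd_right heq hx hy (Int.isCoprime_iff_gcd_eq_one.mp hco.symm) hz2
    · exact exists_smaller_of_odd_left heq hx hz (Int.isCoprime_iff_gcd_eq_one.mp hco) hy2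
  · exact exists_smaller_of_gcd_ne_one ⟨hy, hz, heq⟩ hxy

end Fermat42Sub

theorem not_fermat42Sub {x y z : ℤ} : ¬ Fermat42Sub x y z := by
  induction h : x.natAbs using Nat.strong_induction_on generalizing x y z with
  | _ n ih =>
    intro hs
    obtain ⟨x', y', z', hs', hlt⟩ := hs.exists_smaller
    exact ih _ (h ▸ hlt) rfl hs'


theorem Rat.pow_four_sub_pow_four_ne_sq {x y z : ℚ} (hy : y ≠ 0) (hz : z ≠ 0) :
    x ^ 4 - y ^ 4 ≠ z ^ 2 := by
  intro h
  set d : ℚ := x.den * y.den with hd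
  have hd0 : d ≠ 0 := by positivity
  have hxd : x * d = x.num * y.den := by rw [hd, ← mul_assoc, Rat.mul_den_eq_num]
  have hyd : y * d = y.num * x.den := by
    rw [hd, mul_comm (x.den : ℚ), ← mul_assoc, Rat.mul_den_eq_num]
  have hw : (z * d ^ 2) ^ 2 = ((x.num * y.den) ^ 4 - (y.num * x.den) ^ 4 : ℤ) := by
    push_cast
    rw [← hxd, ← hyd]
    linear_combination -(d ^ 4) * h
  have hint := (Rat.den_eq_one_iff _).mp (Rat.den_eq_one_of_sq_eq_intCast hw)
  refine not_fermat42Sub (x := x.num * y.den) (y := y.num * x.den) (z := (z * d ^ 2).num)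
    ⟨mul_ne_zero (Rat.num_ne_zero.mpr hy) (by positivity), Rat.num_ne_zero.mpr (by positivity), ?_⟩
  rw [← hint] at hw
  exact_mod_cast hw.symm

theorem exists_rat_eq_tan {θ : ℝ} (hs : ∃ q : ℚ, (q : ℝ) = Real.sin θ)
    (hc : ∃ q : ℚ, (q : ℝ) = Real.cos θ) : ∃ q : ℚ, (q : ℝ) = Real.tan θ := by
  obtain ⟨s, hs⟩ := hs
  obtain ⟨c, hc⟩ := hc
  exact ⟨s / c, by rw [Real.tan_eq_sin_div_cos, ← hs, ← hc]; push_cast; rfl⟩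

theorem no_heron_cuboid_limit :
    ¬ ∃ α α₁ ψ : ℝ,
      (∃ q : ℚ, (q : ℝ) = Real.sin α) ∧ (∃ q : ℚ, (q : ℝ) = Real.cos α) ∧
      (∃ q : ℚ, (q : ℝ) = Real.sin α₁) ∧ (∃ q : ℚ, (q : ℝ) = Real.cos α₁) ∧
      (∃ q : ℚ, (q : ℝ) = Real.sin ψ) ∧ (∃ q : ℚ, (q : ℝ) = Real.cos ψ) ∧
      0 < α ∧ α < Real.pi / 2 ∧ 0 < α₁ ∧ α₁ < Real.pi / 2 ∧
      Real.tan ψ ≠ 0 ∧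
      Real.tan α₁ * Real.tan α = 1 ∧
      Real.tan α₁ ^ 2 - Real.tan α ^ 2 = Real.tan ψ ^ 2 := by
  rintro ⟨α, α₁, ψ, hsα, hcα, -, -, hsψ, hcψ, -, -, -, -, hψ, hprod, hdiff⟩
  obtain ⟨m, hm⟩ := exists_rat_eq_tan hsα hcα
  obtain ⟨t, ht⟩ := exists_rat_eq_tan hsψ hcψ
  have hm0 : m ≠ 0 := by
    rintro rfl
    simp [← hm] at hprod
  have ht0 : t ≠ 0 := by
    rintro rfl
    simp [← ht] at hψ
  refine Rat.pow_four_sub_pow_four_ne_sq (x := 1) hm0 (mul_ne_zero hm0 ht0) ?_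
  have key : (1 : ℝ) ^ 4 - Real.tan α ^ 4 = (Real.tan α * Real.tan ψ) ^ 2 := by
    linear_combination Real.tan α ^ 2 * hdiff - (Real.tan α₁ * Real.tan α + 1) * hprod
  rw [← hm, ← ht] at key
  exact_mod_cast key
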